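/- Let μ be a nonzero uniformly distributed measure on (ℍ^n, d_H) whose support is bounded. Then supp(μ) is an algebraic variety: there exist finitely many polynomial functions p₁, …, p_m : ℝ^{2n+1} → ℝ such that supp(μ) = {x ∈ ℝ^{2n+1} : p₁(x) = ⋯ = p_m(x) = 0}. -/

import Mathlib

open MeasureTheory Set Filter ENNReal NNReal

noncomputable section

/-- The underlying space of the Heisenberg group `ℍⁿ = ℝ²ⁿ × ℝ`. -/
abbrev Heis (n : ℕ) := EuclideanSpace ℝ (Fin (2 * n)) × ℝ

/-- The symplectic form `A(x',y') = -2 ∑ (x_j y_{j+n} - x_{j+n} y_j)` on `ℝ²ⁿ`. -/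
def symp {n : ℕ} (x y : EuclideanSpace ℝ (Fin (2 * n))) : ℝ :=
  -2 * ∑ j : Fin n,
    (x ⟨j.1, by have := j.isLt; omega⟩ * y ⟨j.1 + n, by have := j.isLt; omega⟩ -
     x ⟨j.1 + n, by have := j.isLt; omega⟩ * y ⟨j.1, by have := j.isLt; omega⟩)

/-- The Heisenberg group multiplication. -/
def hmul {n : ℕ} (x y : Heis n) : Heis n := (x.1 + y.1, x.2 + y.2 + symp x.1 y.1)

/-- The Heisenberg group inverse, `x⁻¹ = -x`. -/
def hinv {n : ℕ} (x : Heis n) : Heis n := (-x.1, -x.2)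

/-- The identity element `e = 0`. -/
def eH {n : ℕ} : Heis n := (0, 0)

/-- The Korányi norm `‖x‖_H = (|x'|⁴ + x_{2n+1}²)^{1/4}`. -/
def KNorm {n : ℕ} (x : Heis n) : ℝ := (‖x.1‖ ^ 4 + x.2 ^ 2) ^ ((1 : ℝ) / 4)

/-- The Korányi metric `d_H(x,y) = ‖x⁻¹·y‖_H`. -/
def dH {n : ℕ} (x y : Heis n) : ℝ := KNorm (hmul (hinv x) y)

/-- The closed `d_H`-ball of center `x` and radius `r`. -/
def ballH {n : ℕ} (x : Heis n) (r : ℝ) : Set (Heis n) := {y | dH x y ≤ r}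

/-- The support of a measure with respect to the Korányi metric. -/
def suppH {n : ℕ} (μ : Measure (Heis n)) : Set (Heis n) := {x | ∀ r > 0, 0 < μ (ballH x r)}

/-- A Radon measure is uniformly distributed if all balls centered on its support of
a common radius have the same measure. -/
def UniformlyDistributed {n : ℕ} (μ : Measure (Heis n)) : Prop :=
  ∀ x ∈ suppH μ, ∀ y ∈ suppH μ, ∀ r : ℝ, 0 < r → μ (ballH x r) = μ (ballH y r)

/-- The dilations `δ_r(x', x_{2n+1}) = (r x', r² x_{2n+1})`. -/
def dil {n : ℕ} (r : ℝ) (x : Heis n) : Heis n := (r • x.1, r ^ 2 * x.2)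

/-- `d_H`-diameter of a set, as an extended real. -/
def ediamH {n : ℕ} (E : Set (Heis n)) : ℝ≥0∞ :=
  ⨆ x ∈ E, ⨆ y ∈ E, ENNReal.ofReal (dH x y)

/-- The `s`-dimensional Hausdorff measure built from the Korányi metric `d_H`. -/
def hausH {n : ℕ} (s : ℝ) (E : Set (Heis n)) : ℝ≥0∞ :=
  ⨆ (δ : ℝ) (_ : 0 < δ), ⨅ (t : ℕ → Set (Heis n)) (_ : E ⊆ ⋃ i, t i)
    (_ : ∀ i, ediamH (t i) ≤ ENNReal.ofReal δ), ∑' i, ediamH (t i) ^ s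

/-- The Hausdorff dimension with respect to the Korányi metric `d_H`. -/
def dimHH {n : ℕ} (E : Set (Heis n)) : ℝ≥0∞ :=
  ⨆ (d : ℝ≥0) (_ : hausH (d : ℝ) E = ⊤), (d : ℝ≥0∞)

/-- `Θˢ(μ,x) = d`: the `s`-density of `μ` at `x` exists and equals `d`. -/
def HasDensity {n : ℕ} (μ : Measure (Heis n)) (s : ℝ) (x : Heis n) (d : ℝ≥0∞) : Prop :=
  Tendsto (fun r : ℝ => μ (ballH x r) / ENNReal.ofReal (r ^ s)) (nhdsWithin 0 (Ioi 0)) (nhds d)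

/-- The coordinates of a point of `ℍⁿ` as a vector in `ℝ^{2n+1}`. -/
def coords {n : ℕ} (x : Heis n) : Fin (2 * n + 1) → ℝ :=
  fun j => if h : (j : ℕ) < 2 * n then x.1 ⟨j, h⟩ else x.2

/-!
For `x ∈ supp μ`, uniform distribution says that the push-forward `ν_x` of `μ` under
`y ↦ d_H(x, y)⁴` does not depend on `x`. Since `μ` lives on a compact set, `ν_x` is compactly
supported, hence determined by its moments `∫ d_H(x, y)^{4k} dμ(y)` (Weierstrass approximation);
conversely `ν_x = ν_{x₀}` with `x₀ ∈ supp μ` forces `x ∈ supp μ`. As `d_H(x, y)⁴` is a polynomial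
in the coordinates of `x` and `y`, each moment is a polynomial `P_k(x)`, so
`supp μ = {x | P_k(x) = P_k(x₀) for all k}`, and Hilbert's basis theorem reduces this family of
equations to finitely many.
-/

open Topology

theorem MeasureTheory.Measure.ext_of_Iic_of_ne {ν ν' : Measure ℝ} [IsFiniteMeasure ν] (c : ℝ)
    (h : ∀ a ≠ c, ν (Iic a) = ν' (Iic a)) : ν = ν' := by
  refine ext_of_Iic ν ν' fun a => ?_
  rcases ne_or_eq a c with ha | rfl
  · exact h a ha
  have hInter : ⋂ r > a, Iic r = Iic a := by
    ext t
    simp only [mem_iInter, mem_Iic]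
    exact ⟨fun ht => le_of_forall_gt_imp_ge_of_dense ht, fun ht r hr => ht.trans hr.le⟩
  have hlim : ∀ ρ : Measure ℝ, (∃ r > a, ρ (Iic r) ≠ ∞) →
      Tendsto (fun r => ρ (Iic r)) (𝓝[>] a) (𝓝 (ρ (Iic a))) := fun ρ hρ => by
    simpa only [hInter, Function.comp_def] using
      tendsto_measure_biInter_gt (fun r _ => nullMeasurableSet_Iic)
        (fun i j _ hij => Iic_subset_Iic.2 hij) hρ
  have hfin : ν' (Iic (a + 1)) ≠ ∞ := by
    rw [← h _ (by linarith)]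
    exact measure_ne_top _ _
  refine tendsto_nhds_unique ((hlim ν ⟨a + 1, by linarith, measure_ne_top _ _⟩).congr' ?_)
    (hlim ν' ⟨a + 1, by linarith, hfin⟩)
  filter_upwards [self_mem_nhdsWithin] with r hr using h r hr.ne'

theorem Continuous.integrable_of_ae_mem_isCompact {X E : Type*} [TopologicalSpace X] [T2Space X]
    [MeasurableSpace X] [OpensMeasurableSpace X] [NormedAddCommGroup E] {μ : Measure X}
    [IsFiniteMeasureOnCompacts μ] {K : Set X} (hK : IsCompact K) (hμK : ∀ᵐ x ∂μ, x ∈ K)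
    {f : X → E} (hf : Continuous f) : Integrable f μ := by
  rw [← Measure.restrict_eq_self_of_ae_mem hμK]
  exact hf.continuousOn.integrableOn_compact hK

theorem MeasureTheory.Measure.integral_polynomial_eval {ν : Measure ℝ} [IsFiniteMeasure ν]
    {a b : ℝ} (hν : ∀ᵐ t ∂ν, t ∈ Icc a b) (p : Polynomial ℝ) :
    ∫ t, p.eval t ∂ν = ∑ i ∈ Finset.range (p.natDegree + 1), p.coeff i * ∫ t, t ^ i ∂ν := by
  simp only [Polynomial.eval_eq_sum_range]
  rw [integral_finsetSum _ fun i _ =>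
    ((continuous_pow i).integrable_of_ae_mem_isCompact isCompact_Icc hν).const_mul _]
  simp only [integral_const_mul]

theorem MeasureTheory.Measure.ext_of_integral_pow_eq {ν ν' : Measure ℝ} [IsFiniteMeasure ν]
    [IsFiniteMeasure ν'] {a b : ℝ} (hν : ∀ᵐ t ∂ν, t ∈ Icc a b) (hν' : ∀ᵐ t ∂ν', t ∈ Icc a b)
    (h : ∀ k : ℕ, ∫ t, t ^ k ∂ν = ∫ t, t ^ k ∂ν') : ν = ν' := by
  refine ext_of_forall_integral_eq_of_IsFiniteMeasure fun f => eq_of_forall_dist_le fun ε hε => ?_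
  set C := ν.real univ + ν'.real univ
  obtain ⟨p, hp⟩ := exists_polynomial_near_of_continuousOn a b f f.continuous.continuousOn
    (ε / (C + 1)) (by positivity)
  have happrox : ∀ (ρ : Measure ℝ) [IsFiniteMeasure ρ], (∀ᵐ t ∂ρ, t ∈ Icc a b) →
      dist (∫ t, f t ∂ρ) (∫ t, p.eval t ∂ρ) ≤ ε / (C + 1) * ρ.real univ := by
    intro ρ _ hρ
    rw [dist_eq_norm, ← integral_sub (f.integrable ρ)
      (p.continuous.integrable_of_ae_mem_isCompact isCompact_Icc hρ)]
    refine norm_integral_le_of_norm_le_const ?_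
    filter_upwards [hρ] with t ht
    rw [Real.norm_eq_abs, abs_sub_comm]
    exact (hp t ht).le
  have hpoly : ∫ t, p.eval t ∂ν = ∫ t, p.eval t ∂ν' := by
    simp only [integral_polynomial_eval hν, integral_polynomial_eval hν', h]
  calc dist (∫ t, f t ∂ν) (∫ t, f t ∂ν')
      ≤ dist (∫ t, f t ∂ν) (∫ t, p.eval t ∂ν) + dist (∫ t, f t ∂ν') (∫ t, p.eval t ∂ν') := by
        rw [hpoly, dist_comm (∫ t, f t ∂ν')]
        exact dist_triangle _ _ _
    _ ≤ ε / (C + 1) * ν.real univ + ε / (C + 1) * ν'.real univ :=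
        add_le_add (happrox ν hν) (happrox ν' hν')
    _ = ε * (C / (C + 1)) := by ring
    _ ≤ ε * 1 := by gcongr; exact (div_le_one (by positivity)).2 (by linarith)
    _ = ε := mul_one ε

theorem MvPolynomial.exists_eval_eq_integral {σ τ Y : Type*} [Fintype σ] [Fintype τ]
    [MeasurableSpace Y] (μ : Measure Y) (g : Y → τ → ℝ)
    (hg : ∀ e : τ → ℕ, Integrable (fun y => ∏ j, g y j ^ e j) μ) (Q : MvPolynomial (σ ⊕ τ) ℝ) :
    ∃ P : MvPolynomial σ ℝ, ∀ x : σ → ℝ, eval x P = ∫ y, eval (Sum.elim x (g y)) Q ∂μ := by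
  classical
  refine ⟨∑ m ∈ Q.support, monomial (Finsupp.equivFunOnFinite.symm fun i => m (Sum.inl i))
      (Q.coeff m * ∫ y, ∏ j, g y j ^ m (Sum.inr j) ∂μ), fun x => ?_⟩
  have hsplit : ∀ y, eval (Sum.elim x (g y)) Q = ∑ m ∈ Q.support,
      (Q.coeff m * ∏ i, x i ^ m (Sum.inl i)) * ∏ j, g y j ^ m (Sum.inr j) := fun y => by
    conv_lhs => rw [Q.as_sum]
    rw [map_sum]
    refine Finset.sum_congr rfl fun m _ => ?_
    rw [eval_monomial, Finsupp.prod_pow, Fintype.prod_sum_type]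
    simp only [Sum.elim_inl, Sum.elim_inr]
    ring
  simp only [hsplit]
  rw [integral_finsetSum _ fun m _ => (hg _).const_mul _, map_sum]
  refine Finset.sum_congr rfl fun m _ => ?_
  rw [integral_const_mul, eval_monomial, Finsupp.prod_pow]
  simp only [Finsupp.coe_equivFunOnFinite_symm]
  ring

theorem MvPolynomial.exists_fin_zeroSet_eq {R σ ι : Type*} [CommRing R] [IsNoetherianRing R]
    [Finite σ] (q : ι → MvPolynomial σ R) :
    ∃ (m : ℕ) (p : Fin m → MvPolynomial σ R),
      ∀ x : σ → R, (∀ i, eval x (p i) = 0) ↔ ∀ j, eval x (q j) = 0 := by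
  obtain ⟨m, p, hp⟩ := Submodule.fg_iff_exists_fin_generating_family.1
    (IsNoetherian.noetherian (Ideal.span (range q)))
  refine ⟨m, p, fun x => ?_⟩
  have hvanish : ∀ s : Set (MvPolynomial σ R),
      (∀ f ∈ s, eval x f = 0) ↔ Ideal.span s ≤ RingHom.ker (eval x) := fun s => by
    simp [Ideal.span_le, subset_def]
  simpa only [forall_mem_range] using
    ((hvanish (range p)).trans (by rw [Ideal.span, hp])).trans (hvanish (range q)).symm

section Koranyi

variable {n : ℕ}

lemma coords_castSucc (x : Heis n) (i : Fin (2 * n)) : coords x i.castSucc = x.1 i :=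
  dif_pos i.isLt

lemma coords_last (x : Heis n) : coords x (Fin.last (2 * n)) = x.2 := by
  simp [coords]

lemma continuous_coords_apply (j : Fin (2 * n + 1)) : Continuous fun y : Heis n => coords y j := by
  unfold coords
  split_ifs
  · exact (EuclideanSpace.proj _).continuous.comp continuous_fst
  · exact continuous_snd

def sympFst (j : Fin n) : Fin (2 * n) := ⟨j, by omega⟩

def sympSnd (j : Fin n) : Fin (2 * n) := ⟨j + n, by omega⟩

lemma symp_eq_sum (x y : EuclideanSpace ℝ (Fin (2 * n))) :
    symp x y = -2 * ∑ j, (x (sympFst j) * y (sympSnd j) - x (sympSnd j) * y (sympFst j)) :=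
  rfl

lemma symp_neg_left (x y : EuclideanSpace ℝ (Fin (2 * n))) : symp (-x) y = -symp x y := by
  simp only [symp_eq_sum, PiLp.neg_apply, neg_mul, Finset.mul_sum, ← Finset.sum_neg_distrib]
  exact Finset.sum_congr rfl fun j _ => by ring

lemma symp_self (x : EuclideanSpace ℝ (Fin (2 * n))) : symp x x = 0 := by
  simp [symp_eq_sum, mul_comm]

def dH4 (x y : Heis n) : ℝ :=
  (∑ i, (y.1 i - x.1 i) ^ 2) ^ 2 + (y.2 - x.2 - symp x.1 y.1) ^ 2

lemma dH4_nonneg (x y : Heis n) : 0 ≤ dH4 x y := by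
  unfold dH4
  positivity

lemma dH4_self (x : Heis n) : dH4 x x = 0 := by
  simp [dH4, symp_self]

lemma continuous_dH4 (x : Heis n) : Continuous (dH4 x) := by
  have hcoord : ∀ i, Continuous fun y : Heis n => y.1 i :=
    fun i => (EuclideanSpace.proj i).continuous.comp continuous_fst
  unfold dH4
  simp only [symp_eq_sum]
  fun_prop

lemma dH_eq_rpow (x y : Heis n) : dH x y = dH4 x y ^ (1 / 4 : ℝ) := by
  have hnorm : ‖-x.1 + y.1‖ ^ 4 = (∑ i, (y.1 i - x.1 i) ^ 2) ^ 2 := by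
    rw [show 4 = 2 * 2 by rfl, pow_mul, EuclideanSpace.real_norm_sq_eq]
    simp only [neg_add_eq_sub, PiLp.sub_apply]
  simp only [dH, KNorm, hmul, hinv, hnorm, dH4, symp_neg_left]
  ring_nf

lemma dH_pow_four (x y : Heis n) : dH x y ^ 4 = dH4 x y := by
  rw [dH_eq_rpow, ← Real.rpow_natCast, ← Real.rpow_mul (dH4_nonneg x y)]
  norm_num

lemma dH_nonneg (x y : Heis n) : 0 ≤ dH x y := by
  rw [dH_eq_rpow]
  exact Real.rpow_nonneg (dH4_nonneg x y) _

lemma continuous_dH (x : Heis n) : Continuous (dH x) := by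
  simp only [funext (dH_eq_rpow x)]
  exact (continuous_dH4 x).rpow_const fun _ => Or.inr (by norm_num)

lemma ballH_eq_preimage (x : Heis n) {r : ℝ} (hr : 0 ≤ r) :
    ballH x r = dH4 x ⁻¹' Iic (r ^ 4) := by
  ext y
  simp only [ballH, mem_ofPred_eq, mem_preimage, mem_Iic, ← dH_pow_four]
  exact (pow_le_pow_iff_left₀ (dH_nonneg x y) hr (by norm_num)).symm

open MvPolynomial in
def dH4Poly (n : ℕ) : MvPolynomial (Fin (2 * n + 1) ⊕ Fin (2 * n + 1)) ℝ :=
  (∑ i : Fin (2 * n), (X (.inr i.castSucc) - X (.inl i.castSucc)) ^ 2) ^ 2 +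
  (X (.inr (Fin.last _)) - X (.inl (Fin.last _)) - C (-2) * ∑ j : Fin n,
      (X (.inl (sympFst j).castSucc) * X (.inr (sympSnd j).castSucc) -
       X (.inl (sympSnd j).castSucc) * X (.inr (sympFst j).castSucc))) ^ 2

lemma eval_dH4Poly (x y : Heis n) :
    MvPolynomial.eval (Sum.elim (coords x) (coords y)) (dH4Poly n) = dH4 x y := by
  simp [dH4Poly, dH4, symp_eq_sum, coords_castSucc, coords_last]

end Koranyi

section Support

variable {n : ℕ} {μ : Measure (Heis n)}

lemma measure_compl_suppH (μ : Measure (Heis n)) : μ (suppH μ)ᶜ = 0 := by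
  refine measure_null_of_locally_null _ fun x hx => ?_
  simp only [mem_compl_iff, suppH, mem_ofPred_eq, not_forall, not_lt, nonpos_iff_eq_zero] at hx
  obtain ⟨r, hr, hball⟩ := hx
  refine ⟨{y | dH x y < r}, mem_nhdsWithin_of_mem_nhds ?_,
    measure_mono_null (fun y (hy : dH x y < r) => hy.le) hball⟩
  refine (isOpen_lt (continuous_dH x) continuous_const).mem_nhds ?_
  rwa [mem_ofPred_eq, dH_eq_rpow, dH4_self, Real.zero_rpow (by norm_num)]

lemma ae_mem_closure_suppH (μ : Measure (Heis n)) : ∀ᵐ y ∂μ, y ∈ closure (suppH μ) :=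
  measure_mono_null (compl_subset_compl.2 subset_closure) (measure_compl_suppH μ)

lemma isFiniteMeasure_of_isCompact_closure_suppH [IsFiniteMeasureOnCompacts μ]
    (hK : IsCompact (closure (suppH μ))) : IsFiniteMeasure μ := by
  constructor
  rw [← Measure.restrict_eq_self_of_ae_mem (ae_mem_closure_suppH μ), Measure.restrict_apply_univ]
  exact hK.measure_lt_top

lemma map_dH4_eq_of_mem_suppH [IsFiniteMeasure μ] (hud : UniformlyDistributed μ) {x z : Heis n}
    (hx : x ∈ suppH μ) (hz : z ∈ suppH μ) : μ.map (dH4 x) = μ.map (dH4 z) := by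
  -- `μ {x}` is not the measure of a ball, so `Iic 0` is left to right-continuity.
  refine Measure.ext_of_Iic_of_ne 0 fun a ha => ?_
  rw [Measure.map_apply (continuous_dH4 x).measurable measurableSet_Iic,
    Measure.map_apply (continuous_dH4 z).measurable measurableSet_Iic]
  rcases ha.lt_or_gt with ha | ha
  · have hempty : ∀ w : Heis n, dH4 w ⁻¹' Iic a = ∅ := fun w =>
      eq_empty_of_forall_notMem fun y hy => (dH4_nonneg w y).not_gt (lt_of_le_of_lt hy ha)
    rw [hempty, hempty]
  · have hr : 0 < a ^ (1 / 4 : ℝ) := Real.rpow_pos_of_pos ha _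
    have hpow : (a ^ (1 / 4 : ℝ)) ^ 4 = a := by
      rw [← Real.rpow_natCast, ← Real.rpow_mul ha.le]
      norm_num
    rw [← hpow, ← ballH_eq_preimage x hr.le, ← ballH_eq_preimage z hr.le]
    exact hud x hx z hz _ hr

lemma mem_suppH_of_map_dH4_eq {x x₀ : Heis n} (hx₀ : x₀ ∈ suppH μ)
    (h : μ.map (dH4 x) = μ.map (dH4 x₀)) : x ∈ suppH μ := by
  intro r hr
  rw [ballH_eq_preimage x hr.le,
    ← Measure.map_apply (continuous_dH4 x).measurable measurableSet_Iic, h,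
    Measure.map_apply (continuous_dH4 x₀).measurable measurableSet_Iic,
    ← ballH_eq_preimage x₀ hr.le]
  exact hx₀ r hr

lemma integral_pow_map_dH4 (x : Heis n) (k : ℕ) :
    ∫ t, t ^ k ∂μ.map (dH4 x) = ∫ y, dH4 x y ^ k ∂μ :=
  integral_map (continuous_dH4 x).aemeasurable (continuous_pow k).aestronglyMeasurable

lemma ae_map_dH4_mem_Icc {x : Heis n} {M : ℝ} (hM : ∀ y ∈ closure (suppH μ), dH4 x y ≤ M) :
    ∀ᵐ t ∂μ.map (dH4 x), t ∈ Icc 0 M := by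
  refine (ae_map_iff (continuous_dH4 x).aemeasurable measurableSet_Icc).2 ?_
  filter_upwards [ae_mem_closure_suppH μ] with y hy using ⟨dH4_nonneg x y, hM y hy⟩

lemma mem_suppH_iff_integral_pow_eq [IsFiniteMeasure μ] (hud : UniformlyDistributed μ)
    (hK : IsCompact (closure (suppH μ))) {x x₀ : Heis n} (hx₀ : x₀ ∈ suppH μ) :
    x ∈ suppH μ ↔ ∀ k : ℕ, ∫ y, dH4 x y ^ k ∂μ = ∫ y, dH4 x₀ y ^ k ∂μ := by
  simp only [← integral_pow_map_dH4]
  refine ⟨fun hx k => by rw [map_dH4_eq_of_mem_suppH hud hx hx₀], fun h => ?_⟩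
  obtain ⟨M, hM⟩ := hK.bddAbove_image (continuous_dH4 x).continuousOn
  obtain ⟨M₀, hM₀⟩ := hK.bddAbove_image (continuous_dH4 x₀).continuousOn
  refine mem_suppH_of_map_dH4_eq hx₀ (Measure.ext_of_integral_pow_eq (b := max M M₀)
    (ae_map_dH4_mem_Icc fun y hy => ?_) (ae_map_dH4_mem_Icc fun y hy => ?_) h)
  · exact (hM (mem_image_of_mem _ hy)).trans (le_max_left _ _)
  · exact (hM₀ (mem_image_of_mem _ hy)).trans (le_max_right _ _)

lemma exists_eval_coords_eq_integral_dH4_pow [IsFiniteMeasure μ]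
    (hK : IsCompact (closure (suppH μ))) (k : ℕ) :
    ∃ P : MvPolynomial (Fin (2 * n + 1)) ℝ,
      ∀ x, MvPolynomial.eval (coords x) P = ∫ y, dH4 x y ^ k ∂μ := by
  have hmonomial : ∀ e : Fin (2 * n + 1) → ℕ, Continuous fun y : Heis n => ∏ j, coords y j ^ e j :=
    fun e => continuous_finsetProd _ fun j _ => (continuous_coords_apply j).pow (e j)
  obtain ⟨P, hP⟩ := MvPolynomial.exists_eval_eq_integral μ coords
    (fun e => (hmonomial e).integrable_of_ae_mem_isCompact hK (ae_mem_closure_suppH μ))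
    (dH4Poly n ^ k)
  exact ⟨P, fun x => by simp only [hP, map_pow, eval_dH4Poly]⟩

end Support

theorem statement12_general (n : ℕ) (μ : Measure (Heis n)) [μ.Regular]
    (hud : UniformlyDistributed μ) (hb : Bornology.IsBounded (suppH μ)) :
    ∃ (m : ℕ) (p : Fin m → MvPolynomial (Fin (2 * n + 1)) ℝ),
      suppH μ = {x : Heis n | ∀ i, MvPolynomial.eval (coords x) (p i) = 0} := by
  have hK : IsCompact (closure (suppH μ)) := hb.isCompact_closure
  have : IsFiniteMeasure μ := isFiniteMeasure_of_isCompact_closure_suppH hK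
  rcases (suppH μ).eq_empty_or_nonempty with hempty | ⟨x₀, hx₀⟩
  · exact ⟨1, fun _ => 1, by simp [hempty]⟩
  choose P hP using exists_eval_coords_eq_integral_dH4_pow hK
  obtain ⟨m, p, hp⟩ := MvPolynomial.exists_fin_zeroSet_eq fun k =>
    P k - MvPolynomial.C (MvPolynomial.eval (coords x₀) (P k))
  refine ⟨m, p, ext fun x => ?_⟩
  simp only [mem_ofPred_eq, hp, map_sub, MvPolynomial.eval_C, sub_eq_zero, hP]
  exact mem_suppH_iff_integral_pow_eq hud hK hx₀

/-- The support of a nonzero uniformly distributed measure on `(ℍⁿ, d_H)` with bounded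
support is an algebraic variety: the common zero set of finitely many polynomials in the
coordinates of `ℝ^{2n+1}`. -/
theorem statement12 (n : ℕ) (μ : Measure (Heis n)) [μ.Regular] (hμ : μ ≠ 0)
    (hud : UniformlyDistributed μ) (hb : Bornology.IsBounded (suppH μ)) :
    ∃ (m : ℕ) (p : Fin m → MvPolynomial (Fin (2 * n + 1)) ℝ),
      suppH μ = {x : Heis n | ∀ i, MvPolynomial.eval (coords x) (p i) = 0} :=
  statement12_general n μ hud hb
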